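/- arXiv:2201.11259 — 4 statements merged into one kernel-verified Lean document; each statement's English description precedes it below -/
import Mathlib

section
/- Suppose X = f(Z₁, Z₂) for a bijection f, and given Y the variables Z₁, Z₂ are conditionally independent with densities p_{Z₁|Y}, p_{Z₂|Y}, all positive. Let w_x(x)_i = P(Y=i|X=x) and w₁(x)_i = P(Y=i|Z₁=z₁(x)). Then for all labels i, j: p_{Z₂|Y}(z₂(x)|i) / p_{Z₂|Y}(z₂(x)|j) = (w_x(x)_i / w_x(x)_j) / (w₁(x)_i / w₁(x)_j). -/
/-- Density-ratio identity behind classifier orthogonalization.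
At a fixed point `x`: `p1 i = p_{Z₁|Y}(z₁(x)|i)`, `p2 i = p_{Z₂|Y}(z₂(x)|i)`,
`J` is the Jacobian volume of the diffeomorphism `f` at `(z₁(x), z₂(x))`
(shared across classes), `π i = p_Y(i)` the prior.  By conditional
independence and change of variables, the density of `X` given `Y = i` at `x`
is `p1 i * p2 i * J`, so the full classifier (Bayes posterior) is
`wx i = p1 i * p2 i * J * π i / Σ_j ⋯`, and the principal classifier is
`w1 i = p1 i * π i / Σ_j p1 j * π j`.  Then
`p2 i / p2 j = (wx i / wx j) / (w1 i / w1 j)`. -/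
theorem orthogonal_density_ratio {C : ℕ} (p1 p2 : Fin C → ℝ) (J : ℝ)
    (π wx w1 : Fin C → ℝ)
    (hp1 : ∀ i, 0 < p1 i) (hp2 : ∀ i, 0 < p2 i) (hJ : 0 < J)
    (hπ : ∀ i, 0 < π i)
    (hwx : ∀ i, wx i = p1 i * p2 i * J * π i / ∑ j, p1 j * p2 j * J * π j)
    (hw1 : ∀ i, w1 i = p1 i * π i / ∑ j, p1 j * π j)
    (i j : Fin C) :
    p2 i / p2 j = (wx i / wx j) / (w1 i / w1 j) := by
  have hS1 : (0:ℝ) < ∑ k, p1 k * p2 k * J * π k :=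
    Finset.sum_pos (fun k _ => mul_pos (mul_pos (mul_pos (hp1 k) (hp2 k)) hJ) (hπ k)) ⟨i, Finset.mem_univ i⟩
  have hS2 : (0:ℝ) < ∑ k, p1 k * π k :=
    Finset.sum_pos (fun k _ => mul_pos (hp1 k) (hπ k)) ⟨i, Finset.mem_univ i⟩
  have h1i := (hp1 i).ne'
  have h1j := (hp1 j).ne'
  have h2i := (hp2 i).ne'
  have h2j := (hp2 j).ne'
  have hJi := hJ.ne'
  have hπi := (hπ i).ne'
  have hπj := (hπ j).ne'
  have hS1' := hS1.ne'
  have hS2' := hS2.ne'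
  have hx : wx i / wx j = (p1 i * p2 i * π i) / (p1 j * p2 j * π j) := by
    rw [hwx i, hwx j]
    field_simp
    ring_nf
    exact mul_inv_cancel₀ (by
      have e : ∑ x, J * p1 x * p2 x * π x = ∑ x, p1 x * p2 x * J * π x :=
        Finset.sum_congr rfl (fun x _ => by ring)
      rw [e]; exact hS1')
  have h1 : w1 i / w1 j = (p1 i * π i) / (p1 j * π j) := by
    rw [hw1 i, hw1 j]
    field_simp
  rw [hx, h1]
  field_simp
end

section
/- Under the assumptions of the classifier orthogonalization setup, the Bayes posterior on the orthogonal variable satisfies P(Y=i | Z₂ = z₂(x)) = [P(Y=i) · w_x(x)_i / w₁(x)_i] / Σ_j [P(Y=j) · w_x(x)_j / w₁(x)_j]. -/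
/-!
By conditional independence the joint likelihood factorizes, so dividing the full posterior
`w_x` by the `Z₁`-posterior `w₁` cancels the `Z₁`-likelihood: `π i * w_x i / w₁ i` is the
`Z₂`-likelihood times the prior, up to a factor that does not depend on the class. Normalizing
over the classes removes that factor and leaves the Bayes posterior on `Z₂`.
-/

open Finset

theorem div_sum_eq_div_sum_of_eq_const_mul {ι 𝕜 : Type*} [Fintype ι] [Field 𝕜]
    {f g : ι → 𝕜} {c : 𝕜} (hc : c ≠ 0) (hfg : ∀ k, f k = c * g k) (i : ι) :
    f i / ∑ j, f j = g i / ∑ j, g j := by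
  simp only [hfg, ← mul_sum, mul_div_mul_left _ _ hc]

theorem prior_mul_div_eq_mul_likelihood_mul_prior {𝕜 : Type*} [Field 𝕜]
    {p₁ p₂ J π S T : 𝕜} (hp₁ : p₁ ≠ 0) (hπ : π ≠ 0) (hS : S ≠ 0) (hT : T ≠ 0) :
    π * (p₁ * p₂ * J * π / S) / (p₁ * π / T) = J * T / S * (p₂ * π) := by
  field_simp

/-- Classifier orthogonalization formula.
Same setup as classifier orthogonalization: at a fixed point `x`,
`p1 i = p_{Z₁|Y}(z₁(x)|i)`, `p2 i = p_{Z₂|Y}(z₂(x)|i)`, `J > 0` the shared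
Jacobian volume, `π i = P(Y=i) > 0` the prior, full classifier
`wx i = P(Y=i|X=x)` and principal classifier `w1 i = P(Y=i|Z₁=z₁(x))`
given by Bayes' rule.  Then the Bayes posterior on the orthogonal variable
satisfies
`P(Y=i|Z₂=z₂(x)) = (π i * wx i / w1 i) / Σ_j (π j * wx j / w1 j)`. -/
theorem classifier_orthogonalization {C : ℕ} (p1 p2 : Fin C → ℝ) (J : ℝ)
    (π wx w1 : Fin C → ℝ)
    (hp1 : ∀ i, 0 < p1 i) (hp2 : ∀ i, 0 < p2 i) (hJ : 0 < J)
    (hπ : ∀ i, 0 < π i)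
    (hwx : ∀ i, wx i = p1 i * p2 i * J * π i / ∑ j, p1 j * p2 j * J * π j)
    (hw1 : ∀ i, w1 i = p1 i * π i / ∑ j, p1 j * π j)
    (i : Fin C) :
    p2 i * π i / (∑ j, p2 j * π j) =
      (π i * wx i / w1 i) / ∑ j, π j * wx j / w1 j := by
  have hne : (univ : Finset (Fin C)).Nonempty := ⟨i, mem_univ i⟩
  have hS : 0 < ∑ j, p1 j * p2 j * J * π j :=
    sum_pos (fun j _ => mul_pos (mul_pos (mul_pos (hp1 j) (hp2 j)) hJ) (hπ j)) hne
  have hT : 0 < ∑ j, p1 j * π j := sum_pos (fun j _ => mul_pos (hp1 j) (hπ j)) hne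
  refine (div_sum_eq_div_sum_of_eq_const_mul (f := fun k => π k * wx k / w1 k)
    (g := fun k => p2 k * π k) (div_pos (mul_pos hJ hT) hS).ne' (fun k => ?_) i).symm
  rw [hwx, hw1]
  exact prior_mul_div_eq_mul_likelihood_mul_prior (hp1 k).ne' (hπ k).ne' hS.ne' hT.ne'
end

section
/- Fix a classifier w₁ mapping X to the open simplex and define the orthogonalization (w∖w₁)(x)_i = (w(x)_i / w₁(x)_i) / Σ_{y'} (w(x)_{y'} / w₁(x)_{y'}). Then for any two classifiers ŵ, w* with values in (m,1−m)^C, the risk satisfies the decomposition R(w∖w₁) = R(w) + E_{p(x,y)}[ log ( w₁(x)_y · Σ_{y'} w(x)_{y'}/w₁(x)_{y'} ) ]. -/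
open MeasureTheory

/-- risk decomposition for the orthogonalized classifier,
Step 2 of the proof of Theorem 1.  With population cross-entropy risk
`R(w) = −E_{(x,y)∼μ}[log w(x)_y]`, a fixed classifier `w₁` with values in the
open simplex, and the orthogonalization
`(w∖w₁)(x)_i = (w(x)_i / w₁(x)_i) / Σ_{y'} (w(x)_{y'} / w₁(x)_{y'})`,
we have, for any classifier `w` with values in `(m, 1−m)^C`,
`R(w∖w₁) = R(w) + E_{(x,y)}[log (w₁(x)_y · Σ_{y'} w(x)_{y'}/w₁(x)_{y'})]`. -/
theorem risk_decomposition_orthogonalization {𝒳 : Type*} [MeasurableSpace 𝒳]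
    {C : ℕ} (μ : Measure (𝒳 × Fin C)) [IsProbabilityMeasure μ]
    (w₁ : 𝒳 → Fin C → ℝ)
    (hw₁pos : ∀ x i, 0 < w₁ x i) (hw₁sum : ∀ x, ∑ i, w₁ x i = 1)
    (m : ℝ) (hm : m ∈ Set.Ioo (0:ℝ) (1/2))
    (w : 𝒳 → Fin C → ℝ) (hw : ∀ x i, w x i ∈ Set.Ioo m (1 - m))
    (orth : 𝒳 → Fin C → ℝ)
    (horth : ∀ x i, orth x i = (w x i / w₁ x i) / ∑ j, w x j / w₁ x j)
    (hint₁ : Integrable (fun p : 𝒳 × Fin C => Real.log (w p.1 p.2)) μ)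
    (hint₂ : Integrable (fun p : 𝒳 × Fin C =>
      Real.log (w₁ p.1 p.2 * ∑ j, w p.1 j / w₁ p.1 j)) μ) :
    (∫ p, -Real.log (orth p.1 p.2) ∂μ) =
      (∫ p, -Real.log (w p.1 p.2) ∂μ) +
        ∫ p, Real.log (w₁ p.1 p.2 * ∑ j, w p.1 j / w₁ p.1 j) ∂μ := by
  have hwpos : ∀ x i, 0 < w x i := fun x i => lt_trans hm.1 (hw x i).1
  have key : ∀ p : 𝒳 × Fin C, -Real.log (orth p.1 p.2) =
      -Real.log (w p.1 p.2) + Real.log (w₁ p.1 p.2 * ∑ j, w p.1 j / w₁ p.1 j) := by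
    intro ⟨x, i⟩
    have hS : 0 < ∑ j, w x j / w₁ x j :=
      Finset.sum_pos (fun j _ => div_pos (hwpos x j) (hw₁pos x j)) ⟨i, Finset.mem_univ i⟩
    have h1 : w₁ x i ≠ 0 := (hw₁pos x i).ne'
    rw [horth, div_div, Real.log_div (hwpos x i).ne'
      (mul_ne_zero h1 hS.ne')]
    ring
  rw [show (fun p : 𝒳 × Fin C => -Real.log (orth p.1 p.2)) = fun p =>
      -Real.log (w p.1 p.2) + Real.log (w₁ p.1 p.2 * ∑ j, w p.1 j / w₁ p.1 j) from
    funext key]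
  have := integral_add hint₁.neg hint₂ (μ := μ)
  simpa using this
end

section
/- Let p_s, p_t be source and target distributions with discrete label y(x), and suppose the label-conditioned feature distributions p_s(f(x)|y), p_t(f(x)|y) have disjoint supports across distinct labels y. Define w_x(x)_0 = p_s(f(x)) / (p_s(f(x)) + p_t(f(x))) and w₁(x)_0 = p_s(y(x)) / (p_s(y(x)) + p_t(y(x))). Then the orthogonalized discriminator satisfies (w_x ∖ w₁)(x)_0 = p_s(f(x)|y(x)) / (p_s(f(x)|y(x)) + p_t(f(x)|y(x))). -/
/-!
Disjoint supports collapse the mixtures `p_s(f(x)) = Σ_y p_s(f(x)|y) p_s(y)` to the single term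
`y = y(x)`, so `w_x(x)_0` is the normalization of `p_s(f(x)|y(x)) p_s(y(x))` against
`p_t(f(x)|y(x)) p_t(y(x))`. Orthogonalizing against `w₁` divides both odds by the label-prior odds
`p_s(y(x)) : p_t(y(x))`, which cancels the priors and leaves the label-conditioned odds.
-/

section Orthogonalize

variable {K : Type*} [Field K]

/-- `(w ∖ v)_0` for two-domain discriminators `w, v`, given by their source components. -/
def orthogonalize (w v : K) : K :=
  (w / v) / (w / v + (1 - w) / (1 - v))

theorem one_sub_div_add_self {a b : K} (h : a + b ≠ 0) : 1 - a / (a + b) = b / (a + b) := by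
  rw [one_sub_div h, add_sub_cancel_left]

theorem orthogonalize_div_add_div {a b c d : K} (hab : a + b ≠ 0) (hcd : c + d ≠ 0) :
    orthogonalize (a / (a + b)) (c / (c + d)) = (a / c) / (a / c + b / d) := by
  have odds (x y : K) : x / (a + b) / (y / (c + d)) = x / y * ((c + d) / (a + b)) := by
    rw [div_div_div_eq, div_mul_div_comm, mul_comm (a + b)]
  rw [orthogonalize, one_sub_div_add_self hab, one_sub_div_add_self hcd, odds, odds, ← add_mul,
    mul_div_mul_right _ _ (div_ne_zero hcd hab)]

end Orthogonalize

/-- the orthogonalized domain discriminator.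
At a fixed point `x` with label `y₀ = y(x)`: `psf y = p_s(f(x)|y)` and
`ptf y = p_t(f(x)|y)` are the label-conditioned feature densities, and
`psy, pty` the label priors in the two domains.  Disjoint supports across
labels mean `psf y = 0` and `ptf y = 0` for `y ≠ y₀`.  With (uniform domain
prior)
`wx₀ = p_s(f(x)) / (p_s(f(x)) + p_t(f(x)))`, where
`p_s(f(x)) = Σ_y psf y * psy y` (similarly for `p_t`), and
`w₁₀ = p_s(y(x)) / (p_s(y(x)) + p_t(y(x)))`, the orthogonalized discriminator
`(w_x∖w₁)(x)_0 = (wx₀/w₁₀) / (wx₀/w₁₀ + (1−wx₀)/(1−w₁₀))` equals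
`p_s(f(x)|y(x)) / (p_s(f(x)|y(x)) + p_t(f(x)|y(x)))`. -/
theorem orthogonalized_discriminator {𝒴 : Type*} [Fintype 𝒴]
    (psf ptf psy pty : 𝒴 → ℝ) (y₀ : 𝒴)
    (hpsf : 0 < psf y₀) (hptf : 0 < ptf y₀)
    (hpsy : ∀ y, 0 < psy y) (hpty : ∀ y, 0 < pty y)
    (hdisjs : ∀ y, y ≠ y₀ → psf y = 0)
    (hdisjt : ∀ y, y ≠ y₀ → ptf y = 0)
    (psfx ptfx wx₀ w₁₀ : ℝ)
    (hpsfx : psfx = ∑ y, psf y * psy y)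
    (hptfx : ptfx = ∑ y, ptf y * pty y)
    (hwx : wx₀ = psfx / (psfx + ptfx))
    (hw₁ : w₁₀ = psy y₀ / (psy y₀ + pty y₀)) :
    (wx₀ / w₁₀) / (wx₀ / w₁₀ + (1 - wx₀) / (1 - w₁₀)) =
      psf y₀ / (psf y₀ + ptf y₀) := by
  have hs : psfx = psf y₀ * psy y₀ :=
    hpsfx.trans <| Fintype.sum_eq_single y₀ fun y hy => by rw [hdisjs y hy, zero_mul]
  have ht : ptfx = ptf y₀ * pty y₀ :=
    hptfx.trans <| Fintype.sum_eq_single y₀ fun y hy => by rw [hdisjt y hy, zero_mul]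
  have hpsy₀ := hpsy y₀
  have hpty₀ := hpty y₀
  change orthogonalize wx₀ w₁₀ = _
  rw [hwx, hw₁, hs, ht, orthogonalize_div_add_div (by positivity) (by positivity),
    mul_div_cancel_right₀ _ hpsy₀.ne', mul_div_cancel_right₀ _ hpty₀.ne']
end
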